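/- arXiv:math/0702491 — 8 statements merged into one kernel-verified Lean document; each statement's English description precedes it below -/
import Mathlib

section
/- Let k and l be integers with 2 ≤ k < l ≤ k²/4. Then the cubic polynomial P(λ) = -λ³ + kλ² - lλ + 1 has three distinct real roots λ, μ, ν satisfying 1/l < λ < 1 < μ < k/2 < ν < k. -/
/-- Lemma 1.3 (Lemma `polyn`): for integers `2 ≤ k < l ≤ k²/4`, the cubic
`P(λ) = -λ³ + kλ² - lλ + 1` has three distinct real roots `λ, μ, ν` with
`1/l < λ < 1 < μ < k/2 < ν < k`. -/
theorem stmt_0 (k l : ℤ) (hk : 2 ≤ k) (hkl : k < l) (hlk : (l : ℝ) ≤ (k : ℝ) ^ 2 / 4) :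
    ∃ lam mu nu : ℝ,
      (-lam ^ 3 + (k : ℝ) * lam ^ 2 - (l : ℝ) * lam + 1 = 0) ∧
      (-mu ^ 3 + (k : ℝ) * mu ^ 2 - (l : ℝ) * mu + 1 = 0) ∧
      (-nu ^ 3 + (k : ℝ) * nu ^ 2 - (l : ℝ) * nu + 1 = 0) ∧
      1 / (l : ℝ) < lam ∧ lam < 1 ∧ 1 < mu ∧ mu < (k : ℝ) / 2 ∧
      (k : ℝ) / 2 < nu ∧ nu < (k : ℝ) := by
  have hkR : (2:ℝ) ≤ (k:ℝ) := by exact_mod_cast hk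
  have hklR : (k:ℝ) + 1 ≤ (l:ℝ) := by exact_mod_cast hkl
  have hk5 : (5:ℝ) ≤ (k:ℝ) := by
    have h5 : (5:ℤ) ≤ k := by
      by_contra h
      push_neg at h
      have h4 : (k:ℝ) ≤ 4 := by exact_mod_cast (by omega : k ≤ 4)
      nlinarith [mul_nonneg (by linarith : (0:ℝ) ≤ 4 - (k:ℝ)) (by linarith : (0:ℝ) ≤ (k:ℝ))]
    exact_mod_cast h5
  have hlpos : (0:ℝ) < (l:ℝ) := by linarith
  set f : ℝ → ℝ := fun x => -x^3 + (k:ℝ)*x^2 - (l:ℝ)*x + 1 with hf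
  have hcont : Continuous f := by fun_prop
  have hf1 : f 1 < 0 := by simp only [hf]; nlinarith
  have hfl : 0 < f (1/(l:ℝ)) := by
    have h : f (1/(l:ℝ)) = ((k:ℝ)*(l:ℝ) - 1)/(l:ℝ)^3 := by
      simp only [hf]; field_simp; ring
    rw [h]
    exact div_pos (by nlinarith) (by positivity)
  have hfk2 : 0 < f ((k:ℝ)/2) := by
    simp only [hf]
    nlinarith [mul_le_mul_of_nonneg_left hlk (show (0:ℝ) ≤ (k:ℝ) by linarith)]
  have hfk : f (k:ℝ) < 0 := by simp only [hf]; nlinarith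
  have ha : (1/(l:ℝ)) < 1 := by rw [div_lt_one hlpos]; linarith
  have hb : (1:ℝ) < (k:ℝ)/2 := by linarith
  have hc : (k:ℝ)/2 < (k:ℝ) := by linarith
  obtain ⟨lam, hlam, hlam0⟩ := intermediate_value_Ioo' ha.le hcont.continuousOn ⟨hf1, hfl⟩
  obtain ⟨mu, hmu, hmu0⟩ := intermediate_value_Ioo hb.le hcont.continuousOn ⟨hf1, hfk2⟩
  obtain ⟨nu, hnu, hnu0⟩ := intermediate_value_Ioo' hc.le hcont.continuousOn ⟨hfk, hfk2⟩
  exact ⟨lam, mu, nu, hlam0, hmu0, hnu0, hlam.1, hlam.2, hmu.1, hmu.2, hnu.1, hnu.2⟩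
end

section
/- Let ρ, ψ, δ : ℝ → ℝ be C¹ functions, each periodic with period p > 0, satisfying ρ' + ψρ = δ on ℝ. If δ(t) ≠ 0 for all t ∈ ℝ, then ρ(t) ≠ 0 for all t ∈ ℝ. -/
/-!
At a zero `t` of `ρ` the equation gives `ρ' t = δ t`, and `δ`, being continuous and nowhere zero,
has constant sign, say positive. So `ρ` crosses zero upwards at each of its zeros, which allows
at most one zero: just after the last zero before a later one, `ρ` would be positive, and just
before that later zero negative, forcing a zero in between. Periodicity turns a zero `t` into a
second zero `t + p`.
-/

open Set Filter Topology

theorem Continuous.forall_pos_or_forall_neg {X : Type*} [TopologicalSpace X] [PreconnectedSpace X]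
    {f : X → ℝ} (hf : Continuous f) (h : ∀ x, f x ≠ 0) : (∀ x, 0 < f x) ∨ ∀ x, f x < 0 := by
  by_contra! ⟨⟨a, ha⟩, ⟨b, hb⟩⟩
  obtain ⟨c, hc⟩ := intermediate_value_univ a b hf ⟨ha, hb⟩
  exact h c hc

section ZeroCrossing

variable {f : ℝ → ℝ}

theorem eventually_pos_nhdsGT_of_deriv_pos {x₀ : ℝ} (hf : 0 < deriv f x₀) (hx : f x₀ = 0) :
    ∀ᶠ x in 𝓝[>] x₀, 0 < f x := by
  filter_upwards [nhdsWithin_le_nhds (eventually_nhdsWithin_sign_eq_of_deriv_pos hf hx),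
    self_mem_nhdsWithin] with x hsign hx
  rwa [sign_pos (sub_pos.2 hx), sign_eq_one_iff] at hsign

theorem eventually_neg_nhdsLT_of_deriv_pos {x₀ : ℝ} (hf : 0 < deriv f x₀) (hx : f x₀ = 0) :
    ∀ᶠ x in 𝓝[<] x₀, f x < 0 := by
  filter_upwards [nhdsWithin_le_nhds (eventually_nhdsWithin_sign_eq_of_deriv_pos hf hx),
    self_mem_nhdsWithin] with x hsign hx
  rwa [sign_neg (sub_neg.2 hx), sign_eq_neg_one_iff] at hsign

theorem not_lt_of_deriv_pos_at_zeros (hf : Continuous f) (hd : ∀ x, f x = 0 → 0 < deriv f x)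
    {a b : ℝ} (ha : f a = 0) (hb : f b = 0) : ¬ a < b := by
  intro hab
  obtain ⟨l, hlb, hneg⟩ :=
    mem_nhdsLT_iff_exists_Ico_subset.1 (eventually_neg_nhdsLT_of_deriv_pos (hd b hb) hb)
  set u := max l ((a + b) / 2)
  have hau : a < u := lt_max_of_lt_right (by linarith)
  have hfu : f u < 0 := hneg ⟨le_max_left _ _, max_lt hlb (by linarith)⟩
  -- `c` is the last zero of `f` in `[a, u]`.
  set Z := Icc a u ∩ f ⁻¹' {0}
  have hZ : IsCompact Z := isCompact_Icc.inter_right (isClosed_singleton.preimage hf)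
  have hcZ : sSup Z ∈ Z := hZ.sSup_mem ⟨a, ⟨le_rfl, hau.le⟩, ha⟩
  set c := sSup Z
  have hfc : f c = 0 := hcZ.2
  have hcu : c < u := lt_of_le_of_ne hcZ.1.2 fun h => hfu.ne (h ▸ hfc)
  obtain ⟨x, hfx, hcx, hxu⟩ :=
    ((eventually_pos_nhdsGT_of_deriv_pos (hd c hfc) hfc).and (Ioo_mem_nhdsGT hcu)).exists
  obtain ⟨y, hy, hfy⟩ := intermediate_value_Icc' hxu.le hf.continuousOn ⟨hfu.le, hfx.le⟩
  have hyc : y ≤ c := le_csSup hZ.bddAbove ⟨⟨hcZ.1.1.trans (hcx.le.trans hy.1), hy.2⟩, hfy⟩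
  linarith [hy.1]

theorem subsingleton_zeros_of_deriv_pos (hf : Continuous f) (hd : ∀ x, f x = 0 → 0 < deriv f x) :
    (f ⁻¹' {0}).Subsingleton := fun _ ha _ hb =>
  le_antisymm (not_lt.1 (not_lt_of_deriv_pos_at_zeros hf hd hb ha))
    (not_lt.1 (not_lt_of_deriv_pos_at_zeros hf hd ha hb))

theorem subsingleton_zeros_of_deriv_neg (hf : Continuous f) (hd : ∀ x, f x = 0 → deriv f x < 0) :
    (f ⁻¹' {0}).Subsingleton := by
  have := subsingleton_zeros_of_deriv_pos (f := -f) hf.neg fun x hx => by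
    rw [deriv.neg]
    exact neg_pos.2 (hd x (neg_eq_zero.1 hx))
  convert this using 1
  ext
  simp

end ZeroCrossing

theorem stmt_6_general (p : ℝ) (hp : 0 < p) (ρ ψ δ : ℝ → ℝ)
    (hρ : ContDiff ℝ 1 ρ) (hδ : ContDiff ℝ 1 δ)
    (hρp : Function.Periodic ρ p)
    (hode : ∀ t : ℝ, deriv ρ t + ψ t * ρ t = δ t)
    (hδ0 : ∀ t : ℝ, δ t ≠ 0) :
    ∀ t : ℝ, ρ t ≠ 0 := by
  intro t ht
  have hρc : Continuous ρ := hρ.continuous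
  have hderiv : ∀ s, ρ s = 0 → deriv ρ s = δ s := fun s hs => by
    simpa [hs] using hode s
  have hzeros : (ρ ⁻¹' {0}).Subsingleton := by
    rcases hδ.continuous.forall_pos_or_forall_neg hδ0 with hpos | hneg
    · exact subsingleton_zeros_of_deriv_pos hρc fun s hs => hderiv s hs ▸ hpos s
    · exact subsingleton_zeros_of_deriv_neg hρc fun s hs => hderiv s hs ▸ hneg s
  have : t + p = t := hzeros (show ρ (t + p) = 0 by rw [hρp t, ht]) ht
  linarith

/-- Remark 6.2: if `ρ, ψ, δ : ℝ → ℝ` are `C¹` and periodic of period `p > 0`,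
`ρ' + ψρ = δ` everywhere, and `δ` never vanishes, then `ρ` never vanishes. -/
theorem stmt_6 (p : ℝ) (hp : 0 < p) (ρ ψ δ : ℝ → ℝ)
    (hρ : ContDiff ℝ 1 ρ) (hψ : ContDiff ℝ 1 ψ) (hδ : ContDiff ℝ 1 δ)
    (hρp : Function.Periodic ρ p) (hψp : Function.Periodic ψ p)
    (hδp : Function.Periodic δ p)
    (hode : ∀ t : ℝ, deriv ρ t + ψ t * ρ t = δ t)
    (hδ0 : ∀ t : ℝ, δ t ≠ 0) :
    ∀ t : ℝ, ρ t ≠ 0 :=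
  stmt_6_general p hp ρ ψ δ hρ hδ hρp hode hδ0
end

section
/- Let α : ℝ → ℝ be a C¹ periodic function (with some period p > 0) such that α' + α² is constant. Then α is constant. -/
/-!
At a maximum `t₁` and a minimum `t₂` of `α`, which exist by periodicity, `α'` vanishes, so
`α(t₁)² = c = α(t₂)²`. As `α(t)` lies between `α(t₂)` and `α(t₁)`, this gives `α(t)² ≤ c`, hence
`α' = c - α² ≥ 0` everywhere. So `α` is monotone, and a monotone periodic function is constant.
-/

namespace Function.Periodic

variable {β : Type*} [TopologicalSpace β] [LinearOrder β] {f : ℝ → β} {c : ℝ}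

theorem exists_forall_le_of_continuous [ClosedIciTopology β] (hf : Periodic f c) (hc : c ≠ 0)
    (hcont : Continuous f) : ∃ t₀, ∀ t, f t ≤ f t₀ := by
  obtain ⟨_, ⟨t₀, rfl⟩, hmax⟩ :=
    (hf.compact_of_continuous hc hcont).exists_isGreatest (Set.range_nonempty f)
  exact ⟨t₀, fun t => hmax ⟨t, rfl⟩⟩

theorem exists_forall_ge_of_continuous [ClosedIicTopology β] (hf : Periodic f c) (hc : c ≠ 0)
    (hcont : Continuous f) : ∃ t₀, ∀ t, f t₀ ≤ f t :=
  exists_forall_le_of_continuous (β := βᵒᵈ) hf hc hcont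

theorem eq_of_monotone {α γ : Type*} [AddCommGroup α] [LinearOrder α] [IsOrderedAddMonoid α]
    [Archimedean α] [PartialOrder γ] {g : α → γ} {a : α} (hg : Periodic g a) (ha : 0 < a)
    (hmono : Monotone g) (x y : α) : g x = g y := by
  wlog hxy : x ≤ y generalizing x y
  · exact (this y x (le_of_not_ge hxy)).symm
  obtain ⟨n, hn⟩ := Archimedean.arch (y - x) ha
  refine le_antisymm (hmono hxy) ?_
  calc g y ≤ g (x + n • a) := hmono (sub_le_iff_le_add'.mp hn)
    _ = g x := hg.nsmul n x

end Function.Periodic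

/-- Remark 6.1 (parenthetical claim in Remark `cnsta`): a `C¹` periodic function
`α : ℝ → ℝ` such that `α' + α²` is constant must itself be constant. -/
theorem stmt_8 (p : ℝ) (hp : 0 < p) (α : ℝ → ℝ) (hα : ContDiff ℝ 1 α)
    (hper : Function.Periodic α p)
    (hconst : ∃ c : ℝ, ∀ t : ℝ, deriv α t + α t ^ 2 = c) :
    ∃ a : ℝ, ∀ t : ℝ, α t = a := by
  obtain ⟨c, hc⟩ := hconst
  have hdiff : Differentiable ℝ α := hα.differentiable one_ne_zero
  obtain ⟨t₁, hmax⟩ := hper.exists_forall_le_of_continuous hp.ne' hdiff.continuous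
  obtain ⟨t₂, hmin⟩ := hper.exists_forall_ge_of_continuous hp.ne' hdiff.continuous
  have hc₁ : α t₁ ^ 2 = c := by
    simpa [IsLocalMax.deriv_eq_zero (.of_forall hmax)] using hc t₁
  have hc₂ : α t₂ ^ 2 = c := by
    simpa [IsLocalMin.deriv_eq_zero (.of_forall hmin)] using hc t₂
  have habs : |α t₂| = |α t₁| := (sq_eq_sq_iff_abs_eq_abs _ _).mp (hc₂.trans hc₁.symm)
  have hderiv : ∀ t, 0 ≤ deriv α t := fun t => by
    have hsq : α t ^ 2 ≤ c :=
      hc₁ ▸ sq_le_sq.mpr (by simpa [habs] using abs_le_max_abs_abs (hmin t) (hmax t))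
    linarith [hc t]
  exact ⟨α 0, fun t => hper.eq_of_monotone hp (monotone_of_deriv_nonneg hdiff hderiv) t 0⟩
end

section
/- Let p > 0 and let a ≠ b be real numbers. Suppose α, β, f : ℝ → ℝ are C^∞ functions, periodic of period p, satisfying α' + α² = f + a and β' + β² = f + b. Then the function ρ = α - β is nonzero everywhere on ℝ, and moreover 2α = ρ + (a - b - ρ')/ρ and 2β = -ρ + (a - b - ρ')/ρ. -/
open Set Filter Topology

lemma aux_no_zero (c p : ℝ) (hc : 0 < c) (hp : 0 < p) (ρ : ℝ → ℝ)
    (hρ : Differentiable ℝ ρ) (hper : Function.Periodic ρ p)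
    (hz : ∀ t, ρ t = 0 → deriv ρ t = c) : ∀ t, ρ t ≠ 0 := by
  intro t₀ h0
  have hcont : Continuous ρ := hρ.continuous
  have hd0 : HasDerivAt ρ c t₀ := by
    have := (hρ t₀).hasDerivAt
    rwa [hz t₀ h0] at this
  have hs0 : Tendsto (slope ρ t₀) (𝓝[≠] t₀) (𝓝 c) :=
    hasDerivAt_iff_tendsto_slope.mp hd0
  have hev0 : ∀ᶠ t in 𝓝[≠] t₀, 0 < slope ρ t₀ t := hs0.eventually (eventually_gt_nhds hc)
  obtain ⟨ε, hε, hball⟩ := Metric.mem_nhdsWithin_iff.mp hev0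
  set δ : ℝ := min (ε/2) (p/2) with hδdef
  have hδ : 0 < δ := lt_min (by linarith) (by linarith)
  have hδε : δ < ε := lt_of_le_of_lt (min_le_left _ _) (by linarith)
  have hδp : δ < p := lt_of_le_of_lt (min_le_right _ _) (by linarith)
  have hpos0 : ∀ t, t₀ < t → t ≤ t₀ + δ → 0 < ρ t := by
    intro t ht1 ht2
    have hne : t ≠ t₀ := ne_of_gt ht1
    have hdist : dist t t₀ < ε := by
      rw [Real.dist_eq, abs_of_pos (by linarith)]; linarith
    have hsl := hball ⟨Metric.mem_ball.mpr hdist, hne⟩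
    simp only [Set.mem_setOf_eq] at hsl
    rw [slope_def_field, h0, sub_zero] at hsl
    rcases div_pos_iff.mp hsl with ⟨h1, _⟩ | ⟨_, h2⟩
    · exact h1
    · linarith
  -- the set of zeros beyond t₀ + δ
  set Z : Set ℝ := Icc (t₀ + δ) (t₀ + p) ∩ ρ ⁻¹' {0} with hZdef
  have hZc : IsClosed Z := isClosed_Icc.inter (isClosed_singleton.preimage hcont)
  have hZne : Z.Nonempty := ⟨t₀ + p, ⟨by constructor <;> linarith, by
    simp [Set.mem_preimage, hper t₀, h0]⟩⟩
  have hZbdd : BddBelow Z := (bddBelow_Icc).mono Set.inter_subset_left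
  set t₁ : ℝ := sInf Z with ht₁def
  have ht₁Z : t₁ ∈ Z := hZc.csInf_mem hZne hZbdd
  obtain ⟨⟨ht₁l, ht₁r⟩, ht₁z⟩ := ht₁Z
  have ht₁z : ρ t₁ = 0 := ht₁z
  have ht₀t₁ : t₀ < t₁ := by linarith
  have hposmid : ∀ t, t₀ < t → t < t₁ → 0 < ρ t := by
    intro t ht1 ht2
    by_cases hcase : t ≤ t₀ + δ
    · exact hpos0 t ht1 hcase
    push_neg at hcase
    by_contra hneg
    push_neg at hneg
    have htne : ρ t ≠ 0 := by
      intro hzero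
      have : t ∈ Z := ⟨⟨le_of_lt hcase, by linarith⟩, hzero⟩
      have := csInf_le hZbdd this
      linarith
    have htlt : ρ t < 0 := lt_of_le_of_ne hneg htne
    have hδpos : 0 < ρ (t₀ + δ) := hpos0 _ (by linarith) le_rfl
    have hsub : Icc (ρ t) (ρ (t₀ + δ)) ⊆ ρ '' Icc (t₀ + δ) t :=
      intermediate_value_Icc' (le_of_lt hcase) hcont.continuousOn
    obtain ⟨s, hsmem, hs0⟩ := hsub ⟨le_of_lt htlt, le_of_lt hδpos⟩
    have : s ∈ Z := ⟨⟨hsmem.1, by linarith [hsmem.2]⟩, hs0⟩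
    have := csInf_le hZbdd this
    linarith [hsmem.2]
  -- contradiction at t₁
  have hd1 : HasDerivAt ρ c t₁ := by
    have := (hρ t₁).hasDerivAt
    rwa [hz t₁ ht₁z] at this
  have hs1 : Tendsto (slope ρ t₁) (𝓝[≠] t₁) (𝓝 c) :=
    hasDerivAt_iff_tendsto_slope.mp hd1
  have hev1 : ∀ᶠ t in 𝓝[≠] t₁, 0 < slope ρ t₁ t := hs1.eventually (eventually_gt_nhds hc)
  obtain ⟨ε₁, hε₁, hball₁⟩ := Metric.mem_nhdsWithin_iff.mp hev1
  set t : ℝ := max ((t₀ + t₁)/2) (t₁ - ε₁/2) with htdef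
  have htlt : t < t₁ := max_lt (by linarith) (by linarith)
  have htgt : t₀ < t := lt_of_lt_of_le (by linarith) (le_max_left _ _)
  have hdist : dist t t₁ < ε₁ := by
    rw [Real.dist_eq, abs_of_neg (by linarith)]
    have := le_max_right ((t₀ + t₁)/2) (t₁ - ε₁/2)
    simp only [← htdef] at this
    linarith
  have hsl := hball₁ ⟨Metric.mem_ball.mpr hdist, ne_of_lt htlt⟩
  simp only [Set.mem_setOf_eq] at hsl
  rw [slope_def_field, ht₁z, sub_zero] at hsl
  have hρt : 0 < ρ t := hposmid t htgt htlt
  rcases div_pos_iff.mp hsl with ⟨_, h2⟩ | ⟨h1, _⟩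
  · linarith
  · linarith


/-- Lemma 8.4 (`slveq`), direct part: if `α, β, f` are smooth `p`-periodic with
`α' + α² = f + a`, `β' + β² = f + b`, `a ≠ b`, then `ρ = α - β` is nowhere zero and
`2α = ρ + (a - b - ρ')/ρ`, `2β = -ρ + (a - b - ρ')/ρ`. -/
theorem stmt_9 (p a b : ℝ) (hp : 0 < p) (hab : a ≠ b) (α β f : ℝ → ℝ)
    (hα : ContDiff ℝ (⊤ : ℕ∞) α) (hβ : ContDiff ℝ (⊤ : ℕ∞) β) (hf : ContDiff ℝ (⊤ : ℕ∞) f)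
    (hαp : Function.Periodic α p) (hβp : Function.Periodic β p)
    (hfp : Function.Periodic f p)
    (hode1 : ∀ t, deriv α t + α t ^ 2 = f t + a)
    (hode2 : ∀ t, deriv β t + β t ^ 2 = f t + b) :
    ∀ t : ℝ, α t - β t ≠ 0 ∧
      2 * α t = (α t - β t) + (a - b - deriv (fun s => α s - β s) t) / (α t - β t) ∧
      2 * β t = -(α t - β t) + (a - b - deriv (fun s => α s - β s) t) / (α t - β t) := by
  have hαd : Differentiable ℝ α := hα.differentiable (by simp)
  have hβd : Differentiable ℝ β := hβ.differentiable (by simp)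
  have hρd : Differentiable ℝ (fun s => α s - β s) := hαd.sub hβd
  have hderρ : ∀ t, deriv (fun s => α s - β s) t = deriv α t - deriv β t := fun t =>
    deriv_sub (hαd t) (hβd t)
  have hkey : ∀ t, deriv (fun s => α s - β s) t
      = (a - b) - (α t - β t) * (α t + β t) := by
    intro t
    rw [hderρ t]
    linear_combination hode1 t - hode2 t
  have hρp : Function.Periodic (fun s => α s - β s) p := hαp.sub hβp
  have hnz : ∀ t, α t - β t ≠ 0 := by
    rcases lt_or_gt_of_ne hab with hlt | hgt
    · -- a < b : use β - α with c = b - a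
      have hρd' : Differentiable ℝ (fun s => β s - α s) := hβd.sub hαd
      have h := aux_no_zero (b - a) p (by linarith) hp (fun s => β s - α s) hρd'
        (hβp.sub hαp) ?_
      · refine fun t ht => h t ?_
        show β t - α t = 0
        linarith
      · intro t ht
        have hz : α t - β t = 0 := by linarith [ht]
        have : deriv (fun s => β s - α s) t = deriv β t - deriv α t :=
          deriv_sub (hβd t) (hαd t)
        rw [this]
        have h1 := hkey t
        rw [hderρ t] at h1
        rw [hz] at h1
        linarith [h1]
    · -- b < a : use α - β with c = a - b
      have h := aux_no_zero (a - b) p (by linarith) hp (fun s => α s - β s) hρd hρp ?_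
      · exact fun t => h t
      · intro t ht
        have h1 := hkey t
        change α t - β t = 0 at ht
        rw [ht] at h1
        simpa using h1
  intro t
  have hr := hnz t
  have hdiv : (a - b - deriv (fun s => α s - β s) t) / (α t - β t) = α t + β t := by
    rw [hkey t, sub_sub_cancel]
    exact mul_div_cancel_left₀ _ hr
  refine ⟨hr, ?_, ?_⟩ <;> rw [hdiv] <;> ring
end

section
/- Conversely, let p > 0, a ≠ b real, and let ρ : ℝ → ℝ be a C^∞ function, periodic of period p, with ρ(t) ≠ 0 for all t. Define α = (ρ + (a - b - ρ')/ρ)/2, β = (-ρ + (a - b - ρ')/ρ)/2, and f = α' + α² - a. Then α, β, f are periodic of period p and satisfy α' + α² = f + a and β' + β² = f + b. -/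
/-- Lemma 8.4 (`slveq`), converse part: given a smooth nowhere-vanishing `p`-periodic
`ρ` and `a ≠ b`, the functions `α = (ρ + (a-b-ρ')/ρ)/2`, `β = (-ρ + (a-b-ρ')/ρ)/2`,
`f = α' + α² - a` are `p`-periodic and satisfy `α' + α² = f + a`, `β' + β² = f + b`. -/
theorem stmt_10 (p a b : ℝ) (hp : 0 < p) (hab : a ≠ b) (ρ : ℝ → ℝ)
    (hρ : ContDiff ℝ (⊤ : ℕ∞) ρ) (hρp : Function.Periodic ρ p) (hρ0 : ∀ t, ρ t ≠ 0)
    (α β f : ℝ → ℝ)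
    (hα : ∀ t, α t = (ρ t + (a - b - deriv ρ t) / ρ t) / 2)
    (hβ : ∀ t, β t = (-ρ t + (a - b - deriv ρ t) / ρ t) / 2)
    (hf : ∀ t, f t = deriv α t + α t ^ 2 - a) :
    Function.Periodic α p ∧ Function.Periodic β p ∧ Function.Periodic f p ∧
      (∀ t, deriv α t + α t ^ 2 = f t + a) ∧
      (∀ t, deriv β t + β t ^ 2 = f t + b) := by
  have hρd : Differentiable ℝ ρ := hρ.differentiable (by simp)
  have hρ'd : Differentiable ℝ (deriv ρ) :=
    ((contDiff_infty_iff_deriv.mp (hρ.of_le (by simp))).2).differentiable (by norm_num)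
  have hperiod : ∀ g : ℝ → ℝ, Function.Periodic g p → Function.Periodic (deriv g) p := by
    intro g hg t
    have : (fun x => g (x + p)) = g := funext hg
    calc deriv g (t + p) = deriv (fun x => g (x + p)) t := (deriv_comp_add_const g p t).symm
    _ = deriv g t := by rw [this]
  have hρ'p : Function.Periodic (deriv ρ) p := hperiod ρ hρp
  have hαp : Function.Periodic α p := by
    intro t; rw [hα, hα, hρp t, hρ'p t]
  have hβp : Function.Periodic β p := by
    intro t; rw [hβ, hβ, hρp t, hρ'p t]
  have hαeq : α = fun t => (ρ t + (a - b - deriv ρ t) / ρ t) / 2 := funext hα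
  have hαd : Differentiable ℝ α := by
    rw [hαeq]
    exact (hρd.add ((differentiable_const _ |>.sub hρ'd).div hρd hρ0)).div_const 2
  have hfp : Function.Periodic f p := by
    intro t; rw [hf, hf, hperiod α hαp t, hαp t]
  have hβα : ∀ t, β t = α t - ρ t := by
    intro t; rw [hα, hβ]; ring
  have hβeq : β = fun t => α t - ρ t := funext hβα
  have key : ∀ t, deriv β t = deriv α t - deriv ρ t := by
    intro t
    rw [hβeq, deriv_fun_sub (hαd t) (hρd t)]
  refine ⟨hαp, hβp, hfp, fun t => by rw [hf]; ring, fun t => ?_⟩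
  have h2 : α t * ρ t * 2 = ρ t ^ 2 + (a - b - deriv ρ t) := by
    rw [hα]; field_simp [hρ0 t]
  have := hf t
  rw [key t, hβα t]
  nlinarith [this, h2]
end

section
/- Let p > 0, let x : ℝ → ℝ be a C^∞ function periodic of period p, and let r, s > 0. Define ρ(t) = (1 + e^{x(t)})^{-1} [x'(t) + √(x'(t)² + 4(1 + e^{x(t)})(r + s·e^{-x(t)}))] / 2 and σ = e^x · ρ. Then ρ and σ are positive C^∞ functions, periodic of period p, satisfying d/dt [log(σ/ρ)] = ρ + σ - r/ρ - s/σ. -/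
open Real

/-- Lemma 8.6 (`sgphx`), construction direction: for smooth `p`-periodic `x` and
`r, s > 0`, the functions
`ρ = (1+e^x)⁻¹ [x' + √(x'² + 4(1+e^x)(r + s e^{-x}))]/2` and `σ = e^x ρ` are positive,
smooth, `p`-periodic, and satisfy `(log(σ/ρ))' = ρ + σ - r/ρ - s/σ`. -/
theorem stmt_11 (p r s : ℝ) (hp : 0 < p) (hr : 0 < r) (hs : 0 < s)
    (x : ℝ → ℝ) (hx : ContDiff ℝ (⊤ : ℕ∞) x) (hxp : Function.Periodic x p)
    (ρ σ : ℝ → ℝ)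
    (hρ : ∀ t, ρ t = (1 + exp (x t))⁻¹ *
      (deriv x t + sqrt ((deriv x t) ^ 2 +
        4 * (1 + exp (x t)) * (r + s * exp (-x t)))) / 2)
    (hσ : ∀ t, σ t = exp (x t) * ρ t) :
    (∀ t, 0 < ρ t) ∧ (∀ t, 0 < σ t) ∧
      ContDiff ℝ (⊤ : ℕ∞) ρ ∧ ContDiff ℝ (⊤ : ℕ∞) σ ∧
      Function.Periodic ρ p ∧ Function.Periodic σ p ∧
      (∀ t, deriv (fun u => log (σ u / ρ u)) t = ρ t + σ t - r / ρ t - s / σ t) := by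
  have hx' : ContDiff ℝ (⊤ : ℕ∞) (deriv x) :=
    (contDiff_infty_iff_deriv.mp hx).2
  -- basic positivity facts
  have hA : ∀ t, 0 < 1 + exp (x t) := fun t => by positivity
  have hB : ∀ t, 0 < r + s * exp (-x t) := fun t => by positivity
  have hD : ∀ t, 0 < (deriv x t) ^ 2 +
      4 * (1 + exp (x t)) * (r + s * exp (-x t)) := fun t => by
    have := hA t; have := hB t; nlinarith [sq_nonneg (deriv x t)]
  have hgt : ∀ t, |deriv x t| < sqrt ((deriv x t) ^ 2 +
      4 * (1 + exp (x t)) * (r + s * exp (-x t))) := by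
    intro t
    calc |deriv x t| = sqrt ((deriv x t) ^ 2) := by rw [sqrt_sq_eq_abs]
      _ < _ := by
        apply sqrt_lt_sqrt (sq_nonneg _)
        have := hA t; have := hB t; nlinarith
  have hgt' : ∀ t, deriv x t < sqrt ((deriv x t) ^ 2 +
      4 * (1 + exp (x t)) * (r + s * exp (-x t))) :=
    fun t => lt_of_le_of_lt (le_abs_self _) (hgt t)
  have hρpos : ∀ t, 0 < ρ t := by
    intro t
    rw [hρ t]
    have h1 := hgt t
    have h1' := neg_abs_le (deriv x t)
    have h2 := hA t
    have h3 : 0 < deriv x t + sqrt ((deriv x t) ^ 2 +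
        4 * (1 + exp (x t)) * (r + s * exp (-x t))) := by linarith
    exact div_pos (mul_pos (inv_pos.mpr h2) h3) two_pos
  have hσpos : ∀ t, 0 < σ t := fun t => by
    rw [hσ t]; exact mul_pos (exp_pos _) (hρpos t)
  -- the key quadratic identity: (1+e^x) ρ² - x' ρ - (r + s e^{-x}) = 0
  have hquad : ∀ t, (1 + exp (x t)) * ρ t ^ 2 - deriv x t * ρ t
      - (r + s * exp (-x t)) = 0 := by
    intro t
    have h1 : 2 * (1 + exp (x t)) * ρ t - deriv x t = sqrt ((deriv x t) ^ 2 +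
        4 * (1 + exp (x t)) * (r + s * exp (-x t))) := by
      rw [hρ t]; field_simp; ring
    have h2 : (2 * (1 + exp (x t)) * ρ t - deriv x t) ^ 2 = (deriv x t) ^ 2 +
        4 * (1 + exp (x t)) * (r + s * exp (-x t)) := by
      rw [h1, sq_sqrt (hD t).le]
    have := hA t
    nlinarith
  -- smoothness
  have hDc : ContDiff ℝ (⊤ : ℕ∞) (fun u => (deriv x u) ^ 2 +
      4 * (1 + exp (x u)) * (r + s * exp (-x u))) :=
    (hx'.pow 2).add ((contDiff_const.mul (contDiff_const.add (Real.contDiff_exp.comp hx))).mul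
      (contDiff_const.add (contDiff_const.mul
        (Real.contDiff_exp.comp hx.neg))))
  have hρc : ContDiff ℝ (⊤ : ℕ∞) ρ := by
    have hρe : ρ = fun t => (1 + exp (x t))⁻¹ *
      (deriv x t + sqrt ((deriv x t) ^ 2 +
        4 * (1 + exp (x t)) * (r + s * exp (-x t)))) / 2 := funext hρ
    rw [hρe]
    apply ContDiff.div_const
    apply ContDiff.mul
    · exact (contDiff_const.add (Real.contDiff_exp.comp hx)).inv
        (fun t => (hA t).ne')
    · apply hx'.add
      rw [contDiff_iff_contDiffAt]
      intro t
      exact hDc.contDiffAt.sqrt (hD t).ne'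
  have hσc : ContDiff ℝ (⊤ : ℕ∞) σ := by
    have hσe : σ = fun t => exp (x t) * ρ t := funext hσ
    rw [hσe]
    exact (Real.contDiff_exp.comp hx).mul hρc
  -- periodicity
  have hx'per : Function.Periodic (deriv x) p := by
    intro t
    have : (fun u => x (u + p)) = x := funext fun u => hxp u
    calc deriv x (t + p) = deriv (fun u => x (u + p)) t := by
          rw [deriv_comp_add_const]
      _ = deriv x t := by rw [this]
  have hρper : Function.Periodic ρ p := by
    intro t; rw [hρ (t + p), hρ t, hxp t, hx'per t]
  have hσper : Function.Periodic σ p := by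
    intro t; rw [hσ (t + p), hσ t, hxp t, hρper t]
  refine ⟨hρpos, hσpos, hρc, hσc, hρper, hσper, ?_⟩
  intro t
  have hfun : (fun u => log (σ u / ρ u)) = x := by
    funext u
    rw [hσ u, mul_div_assoc, div_self (hρpos u).ne', mul_one, log_exp]
  rw [hfun]
  have hq := hquad t
  have hρne := (hρpos t).ne'
  have hσv := hσ t
  have hexp := (exp_pos (x t)).ne'
  rw [hσv]
  have hexpneg : exp (-x t) = (exp (x t))⁻¹ := by rw [exp_neg]
  rw [hexpneg] at hq
  field_simp at hq ⊢
  linear_combination (-1 : ℝ) * hq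
end

section
/- Let δ, ε, ζ be defined as the integrals over [0, p] of (1+e^x)^{-1}·G, (1 + s·e^{-x}/r)^{-1}·G, and (1+e^{-x})^{-1}·G respectively, where G(t) = √(x'(t)² + 4(1+e^{x(t)})(r + s·e^{-x(t)})), x is a C^∞ p-periodic function, and r, s > 0 with r ≠ s. Then δ, ε, ζ are all positive, ε ≠ ζ, and ε < δ + ζ. -/
open Real

/-- The integrals (8.5): with `G(t) = √(x'(t)² + 4(1+e^{x(t)})(r + s e^{-x(t)}))`,
`δ = ∫₀ᵖ (1+e^x)⁻¹ G`, `ε = ∫₀ᵖ (1 + s e^{-x}/r)⁻¹ G`, `ζ = ∫₀ᵖ (1+e^{-x})⁻¹ G`,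
for smooth `p`-periodic `x` and positive `r ≠ s`, one has `δ, ε, ζ > 0`, `ε ≠ ζ`,
and `ε < δ + ζ`. -/
theorem stmt_13 (p r s : ℝ) (hp : 0 < p) (hr : 0 < r) (hs : 0 < s) (hrs : r ≠ s)
    (x : ℝ → ℝ) (hx : ContDiff ℝ (⊤ : ℕ∞) x) (hxp : Function.Periodic x p)
    (G : ℝ → ℝ)
    (hG : ∀ t, G t = sqrt ((deriv x t) ^ 2 +
      4 * (1 + exp (x t)) * (r + s * exp (-x t))))
    (δ ε ζ : ℝ)
    (hδ : δ = ∫ t in (0:ℝ)..p, (1 + exp (x t))⁻¹ * G t)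
    (hε : ε = ∫ t in (0:ℝ)..p, (1 + s * exp (-x t) / r)⁻¹ * G t)
    (hζ : ζ = ∫ t in (0:ℝ)..p, (1 + exp (-x t))⁻¹ * G t) :
    0 < δ ∧ 0 < ε ∧ 0 < ζ ∧ ε ≠ ζ ∧ ε < δ + ζ := by
  have hxc : Continuous x := hx.continuous
  have hdc : Continuous (deriv x) := hx.continuous_deriv (by simp)
  have hGpos : ∀ t, 0 < G t := by
    intro t
    rw [hG t]
    apply Real.sqrt_pos.2
    positivity
  have hGc : Continuous G := by
    have : G = fun t => sqrt ((deriv x t) ^ 2 +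
        4 * (1 + exp (x t)) * (r + s * exp (-x t))) := funext hG
    rw [this]
    apply Continuous.sqrt
    fun_prop
  -- the three integrands
  set fδ : ℝ → ℝ := fun t => (1 + exp (x t))⁻¹ * G t with hfδ
  set fε : ℝ → ℝ := fun t => (1 + s * exp (-x t) / r)⁻¹ * G t with hfε
  set fζ : ℝ → ℝ := fun t => (1 + exp (-x t))⁻¹ * G t with hfζ
  have hd1 : ∀ t, (0:ℝ) < 1 + exp (x t) := fun t => by positivity
  have hd2 : ∀ t, (0:ℝ) < 1 + s * exp (-x t) / r := fun t => by positivity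
  have hd3 : ∀ t, (0:ℝ) < 1 + exp (-x t) := fun t => by positivity
  have hcδ : Continuous fδ := by
    apply Continuous.mul _ hGc
    exact (by fun_prop : Continuous fun t => 1 + exp (x t)).inv₀ fun t => (hd1 t).ne'
  have hcε : Continuous fε := by
    apply Continuous.mul _ hGc
    exact (by fun_prop : Continuous fun t => 1 + s * exp (-x t) / r).inv₀
      fun t => (hd2 t).ne'
  have hcζ : Continuous fζ := by
    apply Continuous.mul _ hGc
    exact (by fun_prop : Continuous fun t => 1 + exp (-x t)).inv₀ fun t => (hd3 t).ne'
  have hpδ : ∀ t, 0 < fδ t := fun t => mul_pos (inv_pos.2 (hd1 t)) (hGpos t)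
  have hpε : ∀ t, 0 < fε t := fun t => mul_pos (inv_pos.2 (hd2 t)) (hGpos t)
  have hpζ : ∀ t, 0 < fζ t := fun t => mul_pos (inv_pos.2 (hd3 t)) (hGpos t)
  have intpos : ∀ f : ℝ → ℝ, Continuous f → (∀ t, 0 < f t) →
      0 < ∫ t in (0:ℝ)..p, f t := fun f hc hposf =>
    intervalIntegral.intervalIntegral_pos_of_pos (hc.intervalIntegrable 0 p) hposf hp
  have hδpos : 0 < δ := hδ ▸ intpos fδ hcδ hpδ
  have hεpos : 0 < ε := hε ▸ intpos fε hcε hpε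
  have hζpos : 0 < ζ := hζ ▸ intpos fζ hcζ hpζ
  -- ε ≠ ζ
  have hεζ : ε ≠ ζ := by
    rcases lt_or_gt_of_ne hrs with h | h
    · -- r < s : fε < fζ pointwise
      have key : ∀ t, 0 < fζ t - fε t := by
        intro t
        have he := exp_pos (-x t)
        have hlt : (1 + s * exp (-x t) / r)⁻¹ < (1 + exp (-x t))⁻¹ := by
          apply inv_strictAnti₀ (hd3 t)
          have : exp (-x t) < s * exp (-x t) / r := by
            rw [lt_div_iff₀ hr]; nlinarith
          linarith
        have := mul_lt_mul_of_pos_right hlt (hGpos t)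
        simp only [hfε, hfζ]; linarith
      have : 0 < ζ - ε := by
        rw [hζ, hε, ← intervalIntegral.integral_sub (hcζ.intervalIntegrable 0 p)
          (hcε.intervalIntegrable 0 p)]
        exact intpos _ (hcζ.sub hcε) key
      linarith
    · -- s < r : fζ < fε pointwise
      have key : ∀ t, 0 < fε t - fζ t := by
        intro t
        have he := exp_pos (-x t)
        have hlt : (1 + exp (-x t))⁻¹ < (1 + s * exp (-x t) / r)⁻¹ := by
          apply inv_strictAnti₀ (hd2 t)
          have : s * exp (-x t) / r < exp (-x t) := by
            rw [div_lt_iff₀ hr]; nlinarith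
          linarith
        have := mul_lt_mul_of_pos_right hlt (hGpos t)
        simp only [hfε, hfζ]; linarith
      have : 0 < ε - ζ := by
        rw [hζ, hε, ← intervalIntegral.integral_sub (hcε.intervalIntegrable 0 p)
          (hcζ.intervalIntegrable 0 p)]
        exact intpos _ (hcε.sub hcζ) key
      linarith
  -- ε < δ + ζ
  have hsum : ε < δ + ζ := by
    have key : ∀ t, 0 < (fδ t + fζ t) - fε t := by
      intro t
      have he := exp_pos (x t)
      have hsumone : (1 + exp (x t))⁻¹ + (1 + exp (-x t))⁻¹ = 1 := by
        rw [exp_neg]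
        field_simp
        ring
      have hlt : (1 + s * exp (-x t) / r)⁻¹ < 1 := by
        apply inv_lt_one_of_one_lt₀
        have : 0 < s * exp (-x t) / r := by positivity
        linarith
      have hmul : (1 + s * exp (-x t) / r)⁻¹ * G t <
          ((1 + exp (x t))⁻¹ + (1 + exp (-x t))⁻¹) * G t := by
        rw [hsumone, one_mul]
        calc (1 + s * exp (-x t) / r)⁻¹ * G t < 1 * G t :=
              mul_lt_mul_of_pos_right hlt (hGpos t)
          _ = G t := one_mul _
      simp only [hfδ, hfε, hfζ]
      nlinarith
    have h0 : 0 < (δ + ζ) - ε := by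
      rw [hδ, hζ, hε,
        ← intervalIntegral.integral_add (hcδ.intervalIntegrable 0 p)
          (hcζ.intervalIntegrable 0 p),
        ← intervalIntegral.integral_sub (f := fun t => fδ t + fζ t) ((hcδ.add hcζ).intervalIntegrable 0 p)
          (hcε.intervalIntegrable 0 p)]
      exact intpos _ ((hcδ.add hcζ).sub hcε) key
    linarith
  exact ⟨hδpos, hεpos, hζpos, hεζ, hsum⟩
end

section
/- Let B : ℝ → End(V) be smooth with V finite-dimensional, let L be the solution space of u' = Bu, and suppose B is periodic of period p (so T(L) = L where (Tu)(t) = u(t-p)). Then the determinant of T : L → L equals exp(-∫₀^p tr B(t) dt). -/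
open intervalIntegral MeasureTheory Finset

section picard

variable {E : Type*} [NormedAddCommGroup E] [NormedSpace ℝ E] [CompleteSpace E]

/-- Picard iteration sequence for the linear ODE `u' = A t (u t)`, `u 0 = v`. -/
noncomputable def picSeq (A : ℝ → E →L[ℝ] E) (v : E) : ℕ → ℝ → E
  | 0 => fun _ => v
  | (n+1) => fun t => ∫ s in (0:ℝ)..t, A s (picSeq A v n s)

lemma picSeq_cont (A : ℝ → E →L[ℝ] E) (hA : Continuous A) (v : E) (n : ℕ) :
    Continuous (picSeq A v n) := by
  induction n with
  | zero => exact continuous_const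
  | succ n ih =>
    exact intervalIntegral.continuous_primitive
      (fun a b => ((hA.clm_apply ih)).intervalIntegrable a b) 0

lemma abs_integral_abs_pow (n : ℕ) (t : ℝ) :
    |∫ s in (0:ℝ)..t, |s| ^ n| = |t| ^ (n+1) / (n+1) := by
  have key : ∀ r : ℝ, 0 ≤ r → (∫ s in (0:ℝ)..r, |s| ^ n) = r ^ (n+1) / (n+1) := by
    intro r hr
    rw [intervalIntegral.integral_congr (g := fun s => s ^ n), integral_pow]
    · simp
    · intro s hs
      rw [Set.uIcc_of_le hr] at hs
      simp [abs_of_nonneg hs.1]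
  rcases le_or_gt 0 t with h | h
  · rw [key t h, abs_of_nonneg h, abs_of_nonneg (by positivity)]
  · have h2 := intervalIntegral.integral_comp_neg (a := (0:ℝ)) (b := t) (fun s => |s| ^ n)
    simp only [abs_neg, neg_zero] at h2
    rw [h2, intervalIntegral.integral_symm 0 (-t), key (-t) (by linarith), abs_neg,
      abs_of_nonneg (div_nonneg (pow_nonneg (by linarith : (0:ℝ) ≤ -t) _) (by positivity)),
      abs_of_neg h]

lemma picSeq_bound (A : ℝ → E →L[ℝ] E) (hA : Continuous A) (v : E) (n : ℕ) (C T : ℝ)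
    (hC : 0 ≤ C) (hAC : ∀ s ∈ Set.Icc (-T) T, ‖A s‖ ≤ C) :
    ∀ t ∈ Set.Icc (-T) T, ‖picSeq A v n t‖ ≤ ‖v‖ * (C ^ n * |t| ^ n / n.factorial) := by
  induction n with
  | zero => intro t ht; simp [picSeq]
  | succ n ih =>
    intro t ht
    have hsub : Set.uIcc (0:ℝ) t ⊆ Set.Icc (-T) T := by
      apply Set.uIcc_subset_Icc _ ht
      constructor <;> [linarith [ht.1, ht.2]; linarith [ht.1, ht.2]]
    have hle : ‖picSeq A v (n+1) t‖ ≤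
        |∫ s in (0:ℝ)..t, ‖v‖ * C ^ (n+1) / n.factorial * |s| ^ n| := by
      refine (intervalIntegral.norm_integral_le_abs_of_norm_le ?_ ?_)
      · refine MeasureTheory.ae_restrict_of_forall_mem measurableSet_uIoc fun s hs => ?_
        have hs' : s ∈ Set.Icc (-T) T := hsub (Set.uIoc_subset_uIcc hs)
        have h1 : ‖A s (picSeq A v n s)‖ ≤ C * (‖v‖ * (C ^ n * |s| ^ n / n.factorial)) :=
          le_trans ((A s).le_opNorm _)
            (mul_le_mul (hAC s hs') (ih s hs') (norm_nonneg _) hC)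
        calc ‖A s (picSeq A v n s)‖ ≤ C * (‖v‖ * (C ^ n * |s| ^ n / n.factorial)) := h1
        _ = ‖v‖ * C ^ (n+1) / n.factorial * |s| ^ n := by ring
      · exact (continuous_const.mul (continuous_abs.pow n)).intervalIntegrable _ _
    rw [intervalIntegral.integral_const_mul, abs_mul, abs_integral_abs_pow] at hle
    refine hle.trans (le_of_eq ?_)
    rw [abs_of_nonneg (by positivity)]
    rw [Nat.factorial_succ]
    push_cast
    field_simp

open Filter Topology in
lemma exists_global_sol (A : ℝ → E →L[ℝ] E) (hA : Continuous A) (v : E) :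
    ∃ u : ℝ → E, u 0 = v ∧ ∀ t, HasDerivAt u (A t (u t)) t := by
  classical
  set u : ℝ → E := fun t => ∑' n, picSeq A v n t with hu
  have hbd : ∀ T : ℝ, ∃ C : ℝ, 0 ≤ C ∧ ∀ s ∈ Set.Icc (-T) T, ‖A s‖ ≤ C := by
    intro T
    obtain ⟨C, hC⟩ := (isCompact_Icc (a := -T) (b := T)).exists_bound_of_continuousOn
      hA.continuousOn
    exact ⟨max C 0, le_max_right _ _, fun s hs => (hC s hs).trans (le_max_left _ _)⟩
  have hMsum : ∀ C T : ℝ, Summable (fun n : ℕ => ‖v‖ * (C ^ n * T ^ n / n.factorial)) := by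
    intro C T
    have h := (Real.summable_pow_div_factorial (C * T)).mul_left ‖v‖
    refine h.congr fun n => ?_
    rw [mul_pow]
  have hsummable : ∀ t : ℝ, Summable (fun n => picSeq A v n t) := by
    intro t
    obtain ⟨C, hC0, hC⟩ := hbd |t|
    exact Summable.of_norm_bounded (hMsum C |t|)
      (fun n => picSeq_bound A hA v n C |t| hC0 hC t ⟨neg_abs_le t, le_abs_self t⟩)
  have hu0 : u 0 = v := by
    have h3 : u 0 = ∑' n, picSeq A v n 0 := rfl
    rw [h3, tsum_eq_single 0]
    · rfl
    · intro n hn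
      cases n with
      | zero => exact absurd rfl hn
      | succ m => simp [picSeq]
  have hucont : Continuous u := by
    rw [continuous_iff_continuousAt]
    intro x
    obtain ⟨C, hC0, hC⟩ := hbd (|x| + 1)
    have hco : ContinuousOn u (Set.Icc (-(|x| + 1)) (|x| + 1)) := by
      refine continuousOn_tsum (fun n => (picSeq_cont A hA v n).continuousOn)
        (hMsum C (|x| + 1)) (fun n s hs => ?_)
      refine (picSeq_bound A hA v n C (|x| + 1) hC0 hC s hs).trans ?_
      have h1 : |s| ≤ |x| + 1 := abs_le.2 ⟨hs.1, hs.2⟩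
      have h2 : (0:ℝ) ≤ |s| := abs_nonneg s
      gcongr
    refine hco.continuousAt (Icc_mem_nhds ?_ ?_)
    · have := neg_abs_le x; linarith
    · have := le_abs_self x; linarith
  have hcont_int : ∀ n, Continuous fun s => A s (picSeq A v n s) :=
    fun n => hA.clm_apply (picSeq_cont A hA v n)
  have hcont_u : Continuous fun s => A s (u s) := hA.clm_apply hucont
  have key : ∀ t : ℝ, u t = v + ∫ s in (0:ℝ)..t, A s (u s) := by
    intro t
    set T : ℝ := |t| + 1 with hT
    obtain ⟨C, hC0, hC⟩ := hbd T
    set Mn : ℕ → ℝ := fun n => ‖v‖ * (C ^ n * T ^ n / n.factorial) with hMn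
    have hMsum' : Summable Mn := hMsum C T
    have htIcc : t ∈ Set.Icc (-T) T := by
      constructor
      · have := neg_abs_le t; rw [hT]; linarith
      · have := le_abs_self t; rw [hT]; linarith
    have hsub : Set.uIcc (0:ℝ) t ⊆ Set.Icc (-T) T := by
      apply Set.uIcc_subset_Icc _ htIcc
      constructor <;> [linarith [htIcc.1, htIcc.2]; linarith [htIcc.1, htIcc.2]]
    have hS : ∀ N : ℕ, (∑ n ∈ range (N + 1), picSeq A v n t)
        = v + ∫ s in (0:ℝ)..t, A s (∑ n ∈ range N, picSeq A v n s) := by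
      intro N
      rw [Finset.sum_range_succ']
      have h0 : picSeq A v 0 t = v := rfl
      rw [h0, add_comm]
      congr 1
      have : ∀ i, picSeq A v (i + 1) t = ∫ s in (0:ℝ)..t, A s (picSeq A v i s) :=
        fun i => rfl
      simp_rw [this]
      rw [← intervalIntegral.integral_finset_sum
        (fun n _ => (hcont_int n).intervalIntegrable _ _)]
      apply intervalIntegral.integral_congr
      intro s _
      simp [map_sum]
    have htail : Tendsto (fun N => ∑' i, Mn (i + N)) atTop (𝓝 0) := by
      have h1 : ∀ N : ℕ, ∑' i, Mn (i + N) = (∑' n, Mn n) - ∑ i ∈ range N, Mn i := by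
        intro N
        have h2 := Summable.sum_add_tsum_nat_add (f := Mn) N hMsum'
        linarith
      simp_rw [h1]
      have := tendsto_const_nhds (x := ∑' n, Mn n) (f := atTop (α := ℕ)) |>.sub
        hMsum'.hasSum.tendsto_sum_nat
      simpa using this
    have hdiff : ∀ (N : ℕ) (s : ℝ), s ∈ Set.Icc (-T) T →
        ‖u s - ∑ n ∈ range N, picSeq A v n s‖ ≤ ∑' i, Mn (i + N) := by
      intro N s hs
      have htailsum : Summable (fun i => Mn (i + N)) := (summable_nat_add_iff N).2 hMsum'
      have hpb : ∀ i : ℕ, ‖picSeq A v (i + N) s‖ ≤ Mn (i + N) :=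
        fun i => picSeq_bound A hA v (i + N) C T hC0 hC s hs |>.trans
          (by
            simp only [hMn]
            have h1 : |s| ≤ T := abs_le.2 ⟨hs.1, hs.2⟩
            have h2 : (0:ℝ) ≤ |s| := abs_nonneg s
            gcongr)
      have heq : u s - ∑ n ∈ range N, picSeq A v n s = ∑' i, picSeq A v (i + N) s := by
        have h2 := Summable.sum_add_tsum_nat_add (f := fun n => picSeq A v n s) N (hsummable s)
        beta_reduce at h2
        have h3 : u s = ∑' n, picSeq A v n s := rfl
        rw [h3, ← h2]
        abel
      rw [heq]
      have hnsum : Summable (fun i => ‖picSeq A v (i + N) s‖) :=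
        Summable.of_nonneg_of_le (fun i => norm_nonneg _) hpb htailsum
      exact (norm_tsum_le_tsum_norm hnsum).trans (Summable.tsum_le_tsum hpb hnsum htailsum)
    have hIconv : Tendsto (fun N => ∫ s in (0:ℝ)..t, A s (∑ n ∈ range N, picSeq A v n s))
        atTop (𝓝 (∫ s in (0:ℝ)..t, A s (u s))) := by
      rw [tendsto_iff_norm_sub_tendsto_zero]
      refine squeeze_zero (fun N => norm_nonneg _) (fun N => ?_)
        (g := fun N => C * (∑' i, Mn (i + N)) * |t - 0|) ?_
      · have hcS : Continuous fun s => A s (∑ n ∈ range N, picSeq A v n s) :=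
          hA.clm_apply (continuous_finset_sum _ fun n _ => picSeq_cont A hA v n)
        rw [← intervalIntegral.integral_sub (hcS.intervalIntegrable _ _)
          (hcont_u.intervalIntegrable _ _)]
        refine intervalIntegral.norm_integral_le_of_norm_le_const fun s hs => ?_
        have hs' : s ∈ Set.Icc (-T) T := hsub (Set.uIoc_subset_uIcc hs)
        have : A s (∑ n ∈ range N, picSeq A v n s) - A s (u s)
            = A s ((∑ n ∈ range N, picSeq A v n s) - u s) := by rw [map_sub]
        rw [this]
        calc ‖A s ((∑ n ∈ range N, picSeq A v n s) - u s)‖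
            ≤ ‖A s‖ * ‖(∑ n ∈ range N, picSeq A v n s) - u s‖ := (A s).le_opNorm _
          _ ≤ C * (∑' i, Mn (i + N)) := by
              rw [norm_sub_rev]
              exact mul_le_mul (hC s hs') (hdiff N s hs') (norm_nonneg _) hC0
      · have h := (htail.const_mul C).mul_const |t - 0|
        simpa using h
    have h1 : Tendsto (fun N => ∑ n ∈ range (N + 1), picSeq A v n t) atTop (𝓝 (u t)) := by
      have := (hsummable t).hasSum.tendsto_sum_nat
      exact this.comp (tendsto_add_atTop_nat 1)
    have h2 : Tendsto (fun N => v + ∫ s in (0:ℝ)..t, A s (∑ n ∈ range N, picSeq A v n s))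
        atTop (𝓝 (v + ∫ s in (0:ℝ)..t, A s (u s))) := tendsto_const_nhds.add hIconv
    simp_rw [hS] at h1
    exact tendsto_nhds_unique h1 h2
  refine ⟨u, hu0, fun t => ?_⟩
  have hd : HasDerivAt (fun r => v + ∫ s in (0:ℝ)..r, A s (u s)) (A t (u t)) t :=
    ((hcont_u.integral_hasStrictDerivAt 0 t).hasDerivAt).const_add v
  exact hd.congr_of_eventuallyEq (Filter.Eventually.of_forall fun r => key r)

end picard

section detstuff

open Matrix

/-- The determinant as a continuous multilinear map in the rows. -/
noncomputable def detCM (n : ℕ) : ContinuousMultilinearMap ℝ (fun _ : Fin n => (Fin n → ℝ)) ℝ :=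
  MultilinearMap.mkContinuous
    (Matrix.detRowAlternating (n := Fin n) (R := ℝ)).toMultilinearMap
    (n.factorial) (fun m => by
      have h0 : (Matrix.detRowAlternating (n := Fin n) (R := ℝ)).toMultilinearMap m
          = Matrix.det (Matrix.of m) := rfl
      rw [h0, Real.norm_eq_abs, Matrix.det_apply']
      calc |∑ σ : Equiv.Perm (Fin n), ((Equiv.Perm.sign σ : ℤ) : ℝ) * ∏ i, Matrix.of m (σ i) i|
          ≤ ∑ σ : Equiv.Perm (Fin n), |((Equiv.Perm.sign σ : ℤ) : ℝ) * ∏ i, Matrix.of m (σ i) i| :=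
            Finset.abs_sum_le_sum_abs _ _
        _ ≤ ∑ _σ : Equiv.Perm (Fin n), ∏ i, ‖m i‖ := by
            refine Finset.sum_le_sum fun σ _ => ?_
            have h1 : |((Equiv.Perm.sign σ : ℤ) : ℝ) * ∏ i, Matrix.of m (σ i) i|
                = |∏ i, Matrix.of m (σ i) i| := by
              rcases Int.units_eq_one_or (Equiv.Perm.sign σ) with h | h <;> simp [h]
            rw [h1, Finset.abs_prod]
            have h2 : (∏ i, |Matrix.of m (σ i) i|) ≤ ∏ i, ‖m (σ i)‖ :=
              Finset.prod_le_prod (fun i _ => abs_nonneg _)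
                (fun i _ => norm_le_pi_norm (m (σ i)) i)
            refine h2.trans (le_of_eq ?_)
            exact Equiv.prod_comp σ fun i => ‖m i‖
        _ = (n.factorial : ℝ) * ∏ i, ‖m i‖ := by
            rw [Finset.sum_const, Finset.card_univ, Fintype.card_perm, Fintype.card_fin,
              nsmul_eq_mul])

lemma detCM_apply (n : ℕ) (m : Fin n → Fin n → ℝ) : detCM n m = Matrix.det (Matrix.of m) := rfl

lemma det_deriv {n : ℕ} (A : ℝ → (Fin n → Fin n → ℝ)) (Bm : ℝ → Matrix (Fin n) (Fin n) ℝ)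
    (t : ℝ) (hA : HasDerivAt A (fun i j => ∑ k, Bm t i k * A t k j) t) :
    HasDerivAt (fun r => Matrix.det (Matrix.of (A r)))
      (Matrix.trace (Bm t) * Matrix.det (Matrix.of (A t))) t := by
  classical
  have h1 := ((detCM n).hasFDerivAt (x := A t)).comp_hasDerivAt t hA
  have h2 : ((detCM n).linearDeriv (A t)) (fun i j => ∑ k, Bm t i k * A t k j)
      = Matrix.trace (Bm t) * Matrix.det (Matrix.of (A t)) := by
    rw [ContinuousMultilinearMap.linearDeriv_apply]
    have h3 : ∀ i : Fin n,
        detCM n (Function.update (A t) i (fun j => ∑ k, Bm t i k * A t k j))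
          = Bm t i i * Matrix.det (Matrix.of (A t)) := by
      intro i
      have e1 : (fun j => ∑ k, Bm t i k * A t k j)
          = ∑ k, Bm t i k • (Matrix.of (A t)) k := by
        funext j
        simp [Finset.sum_apply]
      have e2 : detCM n (Function.update (A t) i (fun j => ∑ k, Bm t i k * A t k j))
          = Matrix.det ((Matrix.of (A t)).updateRow i (fun j => ∑ k, Bm t i k * A t k j)) := rfl
      rw [e2, e1, Matrix.det_updateRow_sum]
      simp
    simp_rw [h3]
    rw [Matrix.trace]
    rw [Finset.sum_mul]
    rfl
  rw [h2] at h1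
  exact h1

open Filter Topology in
lemma liouville {n : ℕ} (A : ℝ → (Fin n → Fin n → ℝ)) (Bm : ℝ → Matrix (Fin n) (Fin n) ℝ)
    (hBc : Continuous fun s => Matrix.trace (Bm s))
    (hA : ∀ t, HasDerivAt A (fun i j => ∑ k, Bm t i k * A t k j) t)
    (hA0 : Matrix.of (A 0) = 1) (t : ℝ) :
    Matrix.det (Matrix.of (A t)) = Real.exp (∫ s in (0:ℝ)..t, Matrix.trace (Bm s)) := by
  set τ : ℝ → ℝ := fun s => Matrix.trace (Bm s) with hτ
  set F : ℝ → ℝ := fun r => ∫ s in (0:ℝ)..r, τ s with hF'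
  have hF : ∀ r, HasDerivAt F (τ r) r := fun r => (hBc.integral_hasStrictDerivAt 0 r).hasDerivAt
  set G : ℝ → ℝ := fun r => Matrix.det (Matrix.of (A r)) * Real.exp (-(F r)) with hG'
  have hG : ∀ r, HasDerivAt G 0 r := by
    intro r
    have h1 := det_deriv A Bm r (hA r)
    have h2 : HasDerivAt (fun r => Real.exp (-(F r))) (Real.exp (-(F r)) * (-(τ r))) r :=
      ((hF r).neg).exp
    have h3 := h1.mul h2
    refine h3.congr_deriv ?_
    simp only [hτ]
    ring
  have hconst : G t = G 0 :=
    is_const_of_deriv_eq_zero (fun x => (hG x).differentiableAt) (fun x => (hG x).deriv) t 0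
  have hG0 : G 0 = 1 := by
    simp [hG', hF', hA0]
  rw [hG0] at hconst
  have h4 := congrArg (fun x => x * Real.exp (F t)) hconst
  simpa [hG', mul_assoc, ← Real.exp_add] using h4

end detstuff

/-- Lemma 3.3(iii) (`rgsbs`(iii)): if `B : ℝ → End(V)` is smooth and `p`-periodic,
then the translation operator `T : L → L`, `(Tu)(t) = u(t-p)`, on the solution space
`L` of `u' = Bu` has determinant `exp(-∫₀ᵖ tr B(t) dt)`.  Via the evaluation
isomorphism `L ≃ V`, `u ↦ u(0)`, the operator `T` corresponds to the endomorphism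
`M` of `V` with `M(u(0)) = u(-p)` for every solution `u`. -/
theorem stmt_16 (V : Type*) [NormedAddCommGroup V] [NormedSpace ℝ V]
    [FiniteDimensional ℝ V] (p : ℝ) (hp : 0 < p)
    (B : ℝ → V →L[ℝ] V) (hB : ContDiff ℝ (⊤ : ℕ∞) B)
    (hBp : ∀ t, B (t + p) = B t)
    (M : V →ₗ[ℝ] V)
    (hM : ∀ u : ℝ → V, (∀ t, HasDerivAt u (B t (u t)) t) → M (u 0) = u (-p)) :
    LinearMap.det M =
      Real.exp (-∫ t in (0:ℝ)..p, LinearMap.trace ℝ V (B t : V →ₗ[ℝ] V)) := by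
  classical
  -- the fundamental solution `Φ` of the operator-valued ODE `Φ' = B ∘ Φ`, `Φ 0 = id`
  set Aop : ℝ → (V →L[ℝ] V) →L[ℝ] (V →L[ℝ] V) :=
    fun t => ContinuousLinearMap.compL ℝ V V V (B t) with hAop
  have hAopc : Continuous Aop :=
    (ContinuousLinearMap.compL ℝ V V V).continuous.comp hB.continuous
  obtain ⟨Φ, hΦ0, hΦ'⟩ := exists_global_sol Aop hAopc (ContinuousLinearMap.id ℝ V)
  -- `M` agrees with `Φ (-p)`
  have hMΦ : ∀ v : V, M v = Φ (-p) v := by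
    intro v
    have hu : ∀ t, HasDerivAt (fun t => Φ t v) (B t (Φ t v)) t := by
      intro t
      have h := ((ContinuousLinearMap.apply ℝ V v).hasFDerivAt).comp_hasDerivAt t (hΦ' t)
      simpa [hAop, Function.comp_def] using h
    simpa [hΦ0] using hM (fun t => Φ t v) hu
  -- pass to matrices
  set n := Module.finrank ℝ V with hn
  set b : Module.Basis (Fin n) ℝ V := Module.finBasis ℝ V with hb
  haveI : FiniteDimensional ℝ (V →L[ℝ] V) :=
    Module.Finite.equiv (LinearMap.toContinuousLinearMap : (V →ₗ[ℝ] V) ≃ₗ[ℝ] (V →L[ℝ] V))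
  set g : (V →L[ℝ] V) →ₗ[ℝ] (Fin n → Fin n → ℝ) :=
    { toFun := fun ψ i j => b.repr (ψ (b j)) i
      map_add' := fun x y => by funext i j; simp
      map_smul' := fun c x => by funext i j; simp } with hg
  have hg_eq : ∀ ψ : V →L[ℝ] V,
      Matrix.of (g ψ) = LinearMap.toMatrix b b (ψ : V →ₗ[ℝ] V) := by
    intro ψ
    ext i j
    simp [hg, LinearMap.toMatrix_apply]
  set A : ℝ → (Fin n → Fin n → ℝ) := fun t => g (Φ t) with hA
  set Bm : ℝ → Matrix (Fin n) (Fin n) ℝ :=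
    fun t => LinearMap.toMatrix b b (B t : V →ₗ[ℝ] V) with hBm
  have hAd : ∀ t, HasDerivAt A (fun i j => ∑ k, Bm t i k * A t k j) t := by
    intro t
    have h := ((LinearMap.toContinuousLinearMap g).hasFDerivAt).comp_hasDerivAt t (hΦ' t)
    have e : g (Aop t (Φ t)) = fun i j => ∑ k, Bm t i k * A t k j := by
      funext i j
      have e1 : g (Aop t (Φ t)) i j
          = LinearMap.toMatrix b b
              ((B t : V →ₗ[ℝ] V).comp (Φ t : V →ₗ[ℝ] V)) i j := by
        simp [hg, hAop, LinearMap.toMatrix_apply]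
      rw [e1, LinearMap.toMatrix_comp b b b, Matrix.mul_apply]
      refine Finset.sum_congr rfl fun k _ => ?_
      simp [hBm, hA, hg, LinearMap.toMatrix_apply]
    have h' : HasDerivAt A (g (Aop t (Φ t))) t := h
    rw [e] at h'
    exact h'
  have hA0 : Matrix.of (A 0) = 1 := by
    rw [hA]
    simp only [hΦ0]
    rw [hg_eq]
    simp
  -- trace continuity
  set trL : (V →L[ℝ] V) →ₗ[ℝ] ℝ :=
    (LinearMap.trace ℝ V).comp (ContinuousLinearMap.coeLM ℝ) with htrL
  have htrace : ∀ s, Matrix.trace (Bm s) = LinearMap.trace ℝ V (B s : V →ₗ[ℝ] V) :=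
    fun s => (LinearMap.trace_eq_matrix_trace ℝ b _).symm
  have hBc : Continuous fun s => Matrix.trace (Bm s) := by
    have h1 : Continuous trL := trL.continuous_of_finiteDimensional
    have h2 : Continuous fun s => trL (B s) := h1.comp hB.continuous
    refine h2.congr fun s => ?_
    rw [htrace]
    rfl
  -- Liouville's formula at `-p`
  have hliou := liouville A Bm hBc hAd hA0 (-p)
  -- identify the left-hand side
  have hMA : Matrix.of (A (-p)) = LinearMap.toMatrix b b M := by
    rw [hA]
    simp only []
    rw [hg_eq]
    congr 1
    exact (LinearMap.ext fun v => (hMΦ v)).symm ▸ rfl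
  have hdet : LinearMap.det M = Matrix.det (Matrix.of (A (-p))) := by
    rw [hMA, LinearMap.det_toMatrix]
  -- identify the integral using periodicity
  have hper : ∀ x, Matrix.trace (Bm (x - p)) = Matrix.trace (Bm x) := by
    intro x
    have h2 : B (x - p) = B x := by
      have h3 := hBp (x - p)
      simpa [sub_add_cancel] using h3.symm
    simp only [hBm]
    rw [h2]
  have hint : (∫ s in (0:ℝ)..(-p), Matrix.trace (Bm s))
      = -∫ s in (0:ℝ)..p, Matrix.trace (Bm s) := by
    rw [intervalIntegral.integral_symm (-p) 0]
    congr 1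
    have hshift := intervalIntegral.integral_comp_sub_right
      (a := (0:ℝ)) (b := p) (f := fun s => Matrix.trace (Bm s)) p
    simp only [zero_sub, sub_self] at hshift
    rw [← hshift]
    exact intervalIntegral.integral_congr fun x _ => hper x
  rw [hdet, hliou, hint]
  congr 1
  congr 1
  exact intervalIntegral.integral_congr fun s _ => htrace s
end
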